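/- With A(n;m) = ∑_{k=0}^∞ (1/2)_m (1/2)_{n−m} ((1/2)_k)²/(n!·(m+1/2)_{k+1}·(n−m+1/2)_{k+1}), the recursion m²·A(n+1;m) − (m−1/2)²·A(n;m−1) = −(1/2)_{n+1−m}·(1/2)_m/(n+1)! holds for 1 ≤ m ≤ n+1. -/

import Mathlib

/-- Pochhammer symbol (rising factorial) `(x)_n`. -/
noncomputable def poch (x : ℝ) (n : ℕ) : ℝ := (ascPochhammer ℝ n).eval x

/-- `A(n;m)` from the expansion of Ausserlechner's integral. -/
noncomputable def A (n m : ℕ) : ℝ :=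
  ∑' k : ℕ, poch (1/2) m * poch (1/2) (n - m) * (poch (1/2) k) ^ 2 /
    (n.factorial * poch ((m : ℝ) + 1/2) (k + 1) * poch ((n - m : ℕ) + 1/2) (k + 1))

/-!
Put `a = m - 1/2`, `b = n - m + 3/2` and `uₖ(c) = (1/2)ₖ² / ((c)ₖ₊₁ (b)ₖ₊₁)`. Once the prefactors
are pulled out, the recursion becomes `(a + 1/2)² ∑ₖ uₖ(a + 1) - a (a + b) ∑ₖ uₖ(a) = -1`.
The combined summand telescopes: it equals `hₖ₊₁ - hₖ` with `hₖ = (1/2)ₖ² / ((a + 1)ₖ (b)ₖ)`,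
and `hₖ ≤ (1/2)ₖ / (3/2)ₖ = 1 / (2k + 1) → 0` while `h₀ = 1`.
-/

open Filter Topology

theorem Summable.hasSum_sub_of_tendsto {G : Type*} [AddCommGroup G] [TopologicalSpace G]
    [IsTopologicalAddGroup G] [T2Space G] {g : ℕ → G} {l : G}
    (hs : Summable fun k ↦ g (k + 1) - g k) (hg : Tendsto g atTop (𝓝 l)) :
    HasSum (fun k ↦ g (k + 1) - g k) (l - g 0) := by
  rw [hs.hasSum_iff_tendsto_nat]
  simp only [Finset.sum_range_sub]
  exact hg.sub_const _

lemma poch_zero (x : ℝ) : poch x 0 = 1 := by simp [poch]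

lemma poch_succ (x : ℝ) (k : ℕ) : poch x (k + 1) = poch x k * (x + k) :=
  ascPochhammer_succ_eval k x

lemma poch_succ_left (x : ℝ) (k : ℕ) : poch x (k + 1) = x * poch (x + 1) k := by
  simp [poch, ascPochhammer_succ_left, Polynomial.eval_comp]

lemma poch_pos {x : ℝ} (hx : 0 < x) (k : ℕ) : 0 < poch x k :=
  ascPochhammer_pos k x hx

lemma poch_le_poch {x y : ℝ} (hx : 0 < x) (hxy : x ≤ y) (k : ℕ) : poch x k ≤ poch y k := by
  induction k with
  | zero => simp [poch_zero]
  | succ k ih =>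
    rw [poch_succ, poch_succ]
    have := poch_pos hx k
    have := poch_pos (hx.trans_le hxy) k
    gcongr

lemma poch_one_half_div_poch_three_halves (k : ℕ) :
    poch (1/2) k / poch (3/2) k = 1 / (2 * k + 1) := by
  have h := (poch_succ (1/2) k).symm.trans (poch_succ_left (1/2) k)
  have := poch_pos (by norm_num : (0:ℝ) < 3/2) k
  rw [div_eq_div_iff (by positivity) (by positivity)]
  norm_num at h
  linarith

noncomputable def seriesTerm (a b : ℝ) (k : ℕ) : ℝ :=
  poch (1/2) k ^ 2 / (poch a (k + 1) * poch b (k + 1))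

noncomputable def telescopingTerm (a b : ℝ) (k : ℕ) : ℝ :=
  poch (1/2) k ^ 2 / (poch (a + 1) k * poch b k)

section

variable {a b : ℝ}

lemma seriesTerm_nonneg (ha : 0 < a) (hb : 0 < b) (k : ℕ) : 0 ≤ seriesTerm a b k := by
  have := poch_pos ha (k + 1)
  have := poch_pos hb (k + 1)
  unfold seriesTerm
  positivity

lemma seriesTerm_le (ha : 1/2 ≤ a) (hb : 1/2 ≤ b) (k : ℕ) :
    seriesTerm a b k ≤ 1 / ((k : ℝ) + 1/2) ^ 2 := by
  have h : (0:ℝ) < 1/2 := by norm_num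
  have := poch_pos h (k + 1)
  have := poch_le_poch h ha (k + 1)
  have := poch_le_poch h hb (k + 1)
  have := poch_pos (h.trans_le ha) (k + 1)
  calc seriesTerm a b k ≤ poch (1/2) k ^ 2 / (poch (1/2) (k + 1) * poch (1/2) (k + 1)) := by
        unfold seriesTerm
        gcongr
    _ = 1 / ((k : ℝ) + 1/2) ^ 2 := by
        have := poch_pos h k
        rw [poch_succ]
        field_simp
        ring

lemma summable_seriesTerm (ha : 1/2 ≤ a) (hb : 1/2 ≤ b) : Summable (seriesTerm a b) := by
  have hs : Summable fun k : ℕ ↦ 1 / ((k : ℝ) + 1/2) ^ 2 := by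
    refine ((Real.summable_one_div_nat_add_rpow (1/2) 2).2 one_lt_two).congr fun k ↦ ?_
    rw [abs_of_pos (by positivity), Real.rpow_two]
  exact hs.of_nonneg_of_le (seriesTerm_nonneg (by linarith) (by linarith)) (seriesTerm_le ha hb)

lemma telescopingTerm_zero : telescopingTerm a b 0 = 1 := by
  simp [telescopingTerm, poch_zero]

lemma telescopingTerm_nonneg (ha : 0 < a) (hb : 0 < b) (k : ℕ) : 0 ≤ telescopingTerm a b k := by
  have := poch_pos (by linarith : 0 < a + 1) k
  have := poch_pos hb k
  unfold telescopingTerm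
  positivity

lemma telescopingTerm_le (ha : 1/2 ≤ a) (hb : 1/2 ≤ b) (k : ℕ) :
    telescopingTerm a b k ≤ 1 / (2 * k + 1) := by
  have h : (0:ℝ) < 1/2 := by norm_num
  have := poch_pos h k
  have := poch_pos (by norm_num : (0:ℝ) < 3/2) k
  have := poch_le_poch (by norm_num : (0:ℝ) < 3/2) (by linarith : 3/2 ≤ a + 1) k
  have := poch_le_poch h hb k
  have := poch_pos (by linarith : 0 < a + 1) k
  calc telescopingTerm a b k ≤ poch (1/2) k ^ 2 / (poch (3/2) k * poch (1/2) k) := by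
        unfold telescopingTerm
        gcongr
    _ = poch (1/2) k / poch (3/2) k := by field_simp
    _ = 1 / (2 * k + 1) := poch_one_half_div_poch_three_halves k

lemma tendsto_telescopingTerm (ha : 1/2 ≤ a) (hb : 1/2 ≤ b) :
    Tendsto (telescopingTerm a b) atTop (𝓝 0) := by
  refine squeeze_zero (telescopingTerm_nonneg (by linarith) (by linarith))
    (telescopingTerm_le ha hb) ?_
  simpa only [one_div, Function.comp_def] using tendsto_inv_atTop_zero.comp <|
    tendsto_atTop_add_const_right _ 1 <|
      (tendsto_natCast_atTop_atTop (R := ℝ)).const_mul_atTop two_pos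

lemma seriesTerm_telescope (ha : 0 < a) (hb : 0 < b) (k : ℕ) :
    (a + 1/2) ^ 2 * seriesTerm (a + 1) b k - a * (a + b) * seriesTerm a b k =
      telescopingTerm a b (k + 1) - telescopingTerm a b k := by
  have := poch_pos (by linarith : 0 < a + 1) k
  have := poch_pos hb k
  have : 0 < a + 1 + k := by positivity
  have : 0 < b + k := by positivity
  unfold seriesTerm telescopingTerm
  rw [poch_succ, poch_succ b, poch_succ_left a, poch_succ (1/2)]
  field_simp
  ring

lemma tsum_seriesTerm_recurrence (ha : 1/2 ≤ a) (hb : 1/2 ≤ b) :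
    (a + 1/2) ^ 2 * ∑' k, seriesTerm (a + 1) b k - a * (a + b) * ∑' k, seriesTerm a b k = -1 := by
  have ha' : 0 < a := by linarith
  have hb' : 0 < b := by linarith
  have hs₁ := (summable_seriesTerm (a := a + 1) (by linarith) hb).mul_left ((a + 1/2) ^ 2)
  have hs₂ := (summable_seriesTerm ha hb).mul_left (a * (a + b))
  have hs := hs₁.sub hs₂
  rw [← tsum_mul_left, ← tsum_mul_left, ← hs₁.tsum_sub hs₂]
  simp only [seriesTerm_telescope ha' hb'] at hs ⊢
  rw [(hs.hasSum_sub_of_tendsto (tendsto_telescopingTerm ha hb)).tsum_eq, telescopingTerm_zero,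
    zero_sub]

end

lemma A_add_left_eq_mul_tsum (m j : ℕ) :
    A (m + j) m = poch (1/2) m * poch (1/2) j / (m + j).factorial *
      ∑' k, seriesTerm (m + 1/2) (j + 1/2) k := by
  rw [A, ← tsum_mul_left, Nat.add_sub_cancel_left]
  congr 1 with k
  rw [seriesTerm]
  ring

theorem stmt12 (n m : ℕ) (hm1 : 1 ≤ m) (hm2 : m ≤ n + 1) :
    (m : ℝ) ^ 2 * A (n + 1) m - ((m : ℝ) - 1/2) ^ 2 * A n (m - 1) =
      -(poch (1/2) (n + 1 - m) * poch (1/2) m / (n + 1).factorial) := by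
  obtain ⟨m, rfl⟩ : ∃ m', m = m' + 1 := ⟨m - 1, by omega⟩
  obtain ⟨j, rfl⟩ : ∃ j, n = m + j := ⟨n - m, by omega⟩
  have hrec := tsum_seriesTerm_recurrence (a := m + 1/2) (b := j + 1/2) (by simp) (by simp)
  rw [show m + j + 1 = m + 1 + j by ring, A_add_left_eq_mul_tsum, Nat.add_sub_cancel,
    A_add_left_eq_mul_tsum, Nat.add_sub_cancel_left, poch_succ, Nat.add_right_comm,
    Nat.factorial_succ]
  push_cast
  rw [show (m : ℝ) + 1 + 1/2 = m + 1/2 + 1 by ring]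
  generalize ∑' k, seriesTerm ((m : ℝ) + 1/2 + 1) (j + 1/2) k = S₁ at hrec ⊢
  generalize ∑' k, seriesTerm ((m : ℝ) + 1/2) (j + 1/2) k = S₂ at hrec ⊢
  field_simp
  linear_combination 2 * (2 * m + 1) * poch (1/2) m * poch (1/2) j * hrec
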